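/- arXiv:1305.5743 — 3 statements merged into one kernel-verified Lean document; each statement's English description precedes it below -/
import Mathlib

section
/- Let a be a strong divisibility sequence of positive integers that is periodic modulo m with period ℓ > 0. Then for any non-zero positive integers i, j, there exists an integer w such that a_{gcd(i+ℓ, j)} ≡ w · a_{gcd(i,j)} (mod m). -/
/-! Bézout writes `a_{gcd(i+ℓ,j)} = gcd(a_{i+ℓ}, a_j)` as an integer combination of `a_{i+ℓ}` and
`a_j`. Modulo `m` we may replace `a_{i+ℓ}` by `a_i`, and the resulting combination of `a_i` and `a_j`
is a multiple of their gcd `a_{gcd(i,j)}`. -/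

theorem Int.exists_gcd_modEq_mul_of_dvd {m x x' y d : ℤ} (hx : x' ≡ x [ZMOD m])
    (hdx : d ∣ x) (hdy : d ∣ y) : ∃ w : ℤ, (Int.gcd x' y : ℤ) ≡ w * d [ZMOD m] := by
  obtain ⟨w, hw⟩ : d ∣ x * x'.gcdA y + y * x'.gcdB y :=
    dvd_add (hdx.mul_right _) (hdy.mul_right _)
  refine ⟨w, ?_⟩
  calc (Int.gcd x' y : ℤ) = x' * x'.gcdA y + y * x'.gcdB y := Int.gcd_eq_gcd_ab x' y
    _ ≡ x * x'.gcdA y + y * x'.gcdB y [ZMOD m] := (hx.mul_right _).add_right _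
    _ = w * d := by rw [hw, mul_comm]

theorem stmt_3_general (m : ℤ) (ℓ : ℕ) (a : ℕ → ℤ)
    (hsd : ∀ i j : ℕ, 0 < i → 0 < j → (Int.gcd (a i) (a j) : ℤ) = a (Nat.gcd i j))
    (hper : ∀ n, a (n + ℓ) ≡ a n [ZMOD m]) :
    ∀ i j : ℕ, 0 < i → 0 < j →
      ∃ w : ℤ, a (Nat.gcd (i + ℓ) j) ≡ w * a (Nat.gcd i j) [ZMOD m] := by
  intro i j hi hj
  have hdi : a (Nat.gcd i j) ∣ a i := hsd i j hi hj ▸ Int.gcd_dvd_left _ _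
  have hdj : a (Nat.gcd i j) ∣ a j := hsd i j hi hj ▸ Int.gcd_dvd_right _ _
  rw [← hsd (i + ℓ) j (by omega) hj]
  exact Int.exists_gcd_modEq_mul_of_dvd (hper i) hdi hdj

/-- If `a` is a strong divisibility sequence of positive integers, periodic modulo `m`
with period `ℓ > 0`, then for positive `i, j` there is an integer `w` with
`a_{gcd(i+ℓ,j)} ≡ w * a_{gcd(i,j)} (mod m)`. -/
theorem stmt_3 (m : ℤ) (ℓ : ℕ) (hm : 1 ≤ m) (hℓ : 0 < ℓ) (a : ℕ → ℤ)
    (hpos : ∀ n, 0 < a n)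
    (hsd : ∀ i j : ℕ, 0 < i → 0 < j → (Int.gcd (a i) (a j) : ℤ) = a (Nat.gcd i j))
    (hper : ∀ n, a (n + ℓ) ≡ a n [ZMOD m]) :
    ∀ i j : ℕ, 0 < i → 0 < j →
      ∃ w : ℤ, a (Nat.gcd (i + ℓ) j) ≡ w * a (Nat.gcd i j) [ZMOD m] :=
  stmt_3_general m ℓ a hsd hper
end

section
/- Let a : ℕ → ℤ satisfy the linear recurrence a_{i+k} = Σ_{j=1}^{k} f_j a_{i+j-1} for all i ≥ 1 with k ≥ 1, and suppose ℓ > k-1. If for all i ∈ {1,...,k} the congruences f_i ≡ a_i (mod m), a_{2i+ℓ-k-1} ≡ 1 (mod m), and Σ_{j ∈ {1,...,k}\{i}} f_j · a_{i+ℓ-k+j-1} ≡ 0 (mod m) hold, then a is periodic modulo m with period ℓ, i.e., a_{n+ℓ} ≡ a_n (mod m) for all n ≥ 1. -/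
open Finset

/-- Past the initial window each term is a combination of the `k` preceding ones, so strong
induction carries the congruence along. -/
theorem Int.modEq_add_of_linearRecurrence {m : ℤ} {k ℓ : ℕ} {f a : ℕ → ℤ}
    (ha : ∀ i ≥ 1, a (i + k) = ∑ j ∈ Icc 1 k, f j * a (i + j - 1))
    (hinit : ∀ n ∈ Icc 1 k, a (n + ℓ) ≡ a n [ZMOD m]) :
    ∀ n ≥ 1, a (n + ℓ) ≡ a n [ZMOD m] := by
  intro n
  induction n using Nat.strong_induction_on with
  | _ n ih =>
  intro hn
  rcases le_or_gt n k with hnk | hkn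
  · exact hinit n (mem_Icc.mpr ⟨hn, hnk⟩)
  · have hrec := ha (n - k) (by omega)
    have hrec_shift := ha (n - k + ℓ) (by omega)
    rw [show n - k + k = n by omega] at hrec
    rw [show n - k + ℓ + k = n + ℓ by omega] at hrec_shift
    rw [hrec, hrec_shift]
    refine Int.ModEq.sum fun j hj => ?_
    obtain ⟨hj1, hjk⟩ := mem_Icc.mp hj
    rw [show n - k + ℓ + j - 1 = n - k + j - 1 + ℓ by omega]
    exact (ih (n - k + j - 1) (by omega) (by omega)).mul_left (f j)

theorem linearRecurrence_eq_add_sum_erase {k ℓ n : ℕ} {f a : ℕ → ℤ}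
    (ha : ∀ i ≥ 1, a (i + k) = ∑ j ∈ Icc 1 k, f j * a (i + j - 1))
    (hkℓ : k ≤ ℓ) (hn : n ∈ Icc 1 k) :
    a (n + ℓ) = f n * a (2 * n + ℓ - k - 1)
      + ∑ j ∈ (Icc 1 k).erase n, f j * a (n + ℓ - k + j - 1) := by
  obtain ⟨hn1, hnk⟩ := mem_Icc.mp hn
  have hrec := ha (n + ℓ - k) (by omega)
  rw [show n + ℓ - k + k = n + ℓ by omega] at hrec
  rw [hrec, ← add_sum_erase _ _ hn, show n + ℓ - k + n - 1 = 2 * n + ℓ - k - 1 by omega]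

theorem stmt_8_general (m : ℤ) (k ℓ : ℕ) (hℓ : k - 1 < ℓ)
    (f : ℕ → ℤ) (a : ℕ → ℤ)
    (ha : ∀ i ≥ 1, a (i + k) = ∑ j ∈ Finset.Icc 1 k, f j * a (i + j - 1))
    (h1 : ∀ i ∈ Finset.Icc 1 k, f i ≡ a i [ZMOD m])
    (h2 : ∀ i ∈ Finset.Icc 1 k, a (2 * i + ℓ - k - 1) ≡ 1 [ZMOD m])
    (h3 : ∀ i ∈ Finset.Icc 1 k,
      (∑ j ∈ (Finset.Icc 1 k).erase i, f j * a (i + ℓ - k + j - 1)) ≡ 0 [ZMOD m]) :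
    ∀ n ≥ 1, a (n + ℓ) ≡ a n [ZMOD m] := by
  refine Int.modEq_add_of_linearRecurrence ha fun n hn => ?_
  rw [linearRecurrence_eq_add_sum_erase ha (by omega) hn]
  calc f n * a (2 * n + ℓ - k - 1) + ∑ j ∈ (Icc 1 k).erase n, f j * a (n + ℓ - k + j - 1)
      ≡ a n * 1 + 0 [ZMOD m] := ((h1 n hn).mul (h2 n hn)).add (h3 n hn)
    _ = a n := by ring

/-- Sufficient congruence conditions on the coefficients and terms for a linear
recurrence sequence to be periodic modulo `m` with period `ℓ > k - 1`. -/
theorem stmt_8 (m : ℤ) (k ℓ : ℕ) (hm : 1 ≤ m) (hk : 1 ≤ k) (hℓ : k - 1 < ℓ)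
    (f : ℕ → ℤ) (a : ℕ → ℤ)
    (ha : ∀ i ≥ 1, a (i + k) = ∑ j ∈ Finset.Icc 1 k, f j * a (i + j - 1))
    (h1 : ∀ i ∈ Finset.Icc 1 k, f i ≡ a i [ZMOD m])
    (h2 : ∀ i ∈ Finset.Icc 1 k, a (2 * i + ℓ - k - 1) ≡ 1 [ZMOD m])
    (h3 : ∀ i ∈ Finset.Icc 1 k,
      (∑ j ∈ (Finset.Icc 1 k).erase i, f j * a (i + ℓ - k + j - 1)) ≡ 0 [ZMOD m]) :
    ∀ n ≥ 1, a (n + ℓ) ≡ a n [ZMOD m] :=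
  stmt_8_general m k ℓ hℓ f a ha h1 h2 h3
end

section
/- Let a : ℕ → ℤ satisfy a_{i+k} = Σ_{j=1}^{k} f_j a_{i+j-1} for all i ≥ 1 with k ≥ 2, and define C_{k,1} = 1 and C_{k,n} = Σ_{j=1}^{n-1} f_{k-j+1} C_{k,n-j} for 2 ≤ n ≤ k. Then for all 1 ≤ i < k: a_{k+i} = Σ_{m=1}^{i} a_m Σ_{j=1}^{m} f_j C_{k,i-m+j} + Σ_{m=i+1}^{k} a_m Σ_{j=1}^{i} f_{m-i+j} C_{k,j}. -/
/-!
Write `b i = a (k + i)` and `S r = ∑_{m=r}^{k} f (m - r + 1) * a m`, the part of the recurrence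
for `a (k + r)` that only involves initial values. Splitting the recurrence for `a (k + i)` into
the terms of index `≤ k` and those of index `> k` gives the triangular recurrence
`b i = S i + ∑_{r<i} g (i - r) * b r` with `g n = f (k - n + 1)`, which is exactly the recurrence
defining `C`. Hence `b i = ∑_{t=1}^{i} C t * S (i + 1 - t)` by strong induction, and expanding
`S` and exchanging the order of summation yields the formula.
-/

open Finset

section

variable {R : Type*} [CommSemiring R]

def convIcc (C s : ℕ → R) (n : ℕ) : R := ∑ t ∈ Icc 1 n, C t * s (n + 1 - t)

theorem sum_mul_convIcc_reassoc (g C s : ℕ → R) (i : ℕ) :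
    ∑ t ∈ Icc 2 i, (∑ j ∈ Icc 1 (t - 1), g j * C (t - j)) * s (i + 1 - t) =
      ∑ r ∈ Icc 1 (i - 1), g (i - r) * convIcc C s r := by
  simp only [convIcc, sum_mul, mul_sum]
  rw [sum_sigma', sum_sigma']
  refine sum_nbij' (fun p => ⟨i - p.2, p.1 - p.2⟩) (fun q => ⟨q.2 + (i - q.1), i - q.1⟩)
    ?_ ?_ ?_ ?_ ?_ <;> rintro ⟨x, y⟩ h <;> simp only [mem_sigma, mem_Icc] at h
  · simp only [mem_sigma, mem_Icc]; omega
  · simp only [mem_sigma, mem_Icc]; omega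
  · simp only [Sigma.mk.injEq, heq_eq_eq]; constructor <;> omega
  · simp only [Sigma.mk.injEq, heq_eq_eq]; constructor <;> omega
  · rw [show i - (i - y) = y by omega, show i - y + 1 - (x - y) = i + 1 - x by omega, mul_assoc]

theorem eq_convIcc_of_rec {g s b C : ℕ → R} {N : ℕ}
    (hb : ∀ i, 1 ≤ i → i ≤ N → b i = s i + ∑ r ∈ Icc 1 (i - 1), g (i - r) * b r)
    (hC1 : C 1 = 1)
    (hC : ∀ n, 2 ≤ n → n ≤ N → C n = ∑ j ∈ Icc 1 (n - 1), g j * C (n - j)) :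
    ∀ i, 1 ≤ i → i ≤ N → b i = convIcc C s i := by
  intro i
  induction i using Nat.strong_induction_on with
  | _ i ih =>
  intro hi hiN
  have peel : convIcc C s i = s i + ∑ t ∈ Icc 2 i, C t * s (i + 1 - t) := by
    rw [convIcc, ← insert_Icc_add_one_left_eq_Icc hi, sum_insert (by simp), hC1, one_mul,
      Nat.add_sub_cancel]
    rfl
  have hb_conv : ∑ r ∈ Icc 1 (i - 1), g (i - r) * b r =
      ∑ r ∈ Icc 1 (i - 1), g (i - r) * convIcc C s r :=
    sum_congr rfl fun r hr => by
      rw [mem_Icc] at hr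
      rw [ih r (by omega) hr.1 (by omega)]
  have hC_rec : ∑ t ∈ Icc 2 i, C t * s (i + 1 - t) =
      ∑ t ∈ Icc 2 i, (∑ j ∈ Icc 1 (t - 1), g j * C (t - j)) * s (i + 1 - t) :=
    sum_congr rfl fun t ht => by
      rw [mem_Icc] at ht
      rw [hC t ht.1 (by omega)]
  rw [hb i hi hiN, peel, hb_conv, hC_rec, sum_mul_convIcc_reassoc]

def truncRecSum (f a : ℕ → R) (k r : ℕ) : R := ∑ m ∈ Icc r k, f (m - r + 1) * a m

theorem linearRec_eq_truncRecSum_add {f a : ℕ → R} {k : ℕ}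
    (ha : ∀ i ≥ 1, a (i + k) = ∑ j ∈ Icc 1 k, f j * a (i + j - 1)) {i : ℕ} (hi : 1 ≤ i)
    (hik : i ≤ k) :
    a (k + i) = truncRecSum f a k i + ∑ r ∈ Icc 1 (i - 1), f (k - (i - r) + 1) * a (k + r) := by
  have hsplit : Icc 1 k = Ioc 0 k := rfl
  rw [add_comm k i, ha i hi, hsplit, ← sum_Ioc_consecutive _ (Nat.zero_le (k - i + 1)) (by omega),
    truncRecSum]
  congr 1
  · refine sum_nbij' (fun j => i + j - 1) (fun m => m - i + 1) ?_ ?_ ?_ ?_ ?_ <;>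
      intro x hx <;> simp only [mem_Ioc, mem_Icc] at hx ⊢ <;> try omega
    rw [show i + x - 1 - i + 1 = x by omega]
  · refine sum_nbij' (fun j => i + j - 1 - k) (fun r => k - i + 1 + r) ?_ ?_ ?_ ?_ ?_ <;>
      intro x hx <;> simp only [mem_Ioc, mem_Icc] at hx ⊢ <;> try omega
    rw [show k - (i - (i + x - 1 - k)) + 1 = x by omega,
      show k + (i + x - 1 - k) = i + x - 1 by omega]

theorem convIcc_truncRecSum {f a C : ℕ → R} {k i : ℕ} (hik : i ≤ k) :
    convIcc C (truncRecSum f a k) i =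
      (∑ m ∈ Icc 1 i, a m * ∑ j ∈ Icc 1 m, f j * C (i - m + j)) +
        ∑ m ∈ Icc (i + 1) k, a m * ∑ j ∈ Icc 1 i, f (m - i + j) * C j := by
  have hsplit : ∀ t ∈ Icc 1 i, C t * truncRecSum f a k (i + 1 - t) =
      ∑ m ∈ Ioc (i - t) i, C t * (f (m + t - i) * a m) +
        ∑ m ∈ Icc (i + 1) k, C t * (f (m - i + t) * a m) := by
    intro t ht
    rw [mem_Icc] at ht
    have hIoc : Icc (i + 1 - t) k = Ioc (i - t) k := by ext; simp only [mem_Icc, mem_Ioc]; omega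
    rw [truncRecSum, hIoc, ← sum_Ioc_consecutive _ (by omega : i - t ≤ i) hik, mul_add,
      mul_sum, mul_sum, Icc_add_one_left_eq_Ioc]
    congr 1 <;> refine sum_congr rfl fun m hm => ?_ <;> simp only [mem_Ioc] at hm
    · rw [show m - (i + 1 - t) + 1 = m + t - i by omega]
    · rw [show m - (i + 1 - t) + 1 = m - i + t by omega]
  have hlow : ∑ t ∈ Icc 1 i, ∑ m ∈ Ioc (i - t) i, C t * (f (m + t - i) * a m) =
      ∑ m ∈ Icc 1 i, a m * ∑ j ∈ Icc 1 m, f j * C (i - m + j) := by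
    simp only [mul_sum]
    rw [sum_sigma', sum_sigma']
    refine sum_nbij' (fun p => ⟨p.2, p.2 + p.1 - i⟩) (fun q => ⟨i - q.1 + q.2, q.1⟩)
      ?_ ?_ ?_ ?_ ?_ <;> rintro ⟨x, y⟩ h <;> simp only [mem_sigma, mem_Icc, mem_Ioc] at h
    · simp only [mem_sigma, mem_Icc]; omega
    · simp only [mem_sigma, mem_Icc, mem_Ioc]; omega
    · simp only [Sigma.mk.injEq, heq_eq_eq, and_true]; omega
    · simp only [Sigma.mk.injEq, heq_eq_eq, true_and]; omega
    · rw [show i - y + (y + x - i) = x by omega, add_comm y x]; ring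
  have hhigh : ∑ t ∈ Icc 1 i, ∑ m ∈ Icc (i + 1) k, C t * (f (m - i + t) * a m) =
      ∑ m ∈ Icc (i + 1) k, a m * ∑ j ∈ Icc 1 i, f (m - i + j) * C j := by
    rw [sum_comm]
    simp only [mul_sum]
    exact sum_congr rfl fun m _ => sum_congr rfl fun t _ => by ring
  rw [convIcc, sum_congr rfl hsplit, sum_add_distrib, hlow, hhigh]

end

theorem stmt_11_general (k : ℕ) (f : ℕ → ℤ) (a : ℕ → ℤ) (C : ℕ → ℤ)
    (ha : ∀ i ≥ 1, a (i + k) = ∑ j ∈ Finset.Icc 1 k, f j * a (i + j - 1))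
    (hC1 : C 1 = 1)
    (hCrec : ∀ n, 2 ≤ n → n ≤ k →
      C n = ∑ j ∈ Finset.Icc 1 (n - 1), f (k - j + 1) * C (n - j)) :
    ∀ i, 1 ≤ i → i < k →
      a (k + i) =
        (∑ m ∈ Finset.Icc 1 i, a m * ∑ j ∈ Finset.Icc 1 m, f j * C (i - m + j)) +
        ∑ m ∈ Finset.Icc (i + 1) k, a m * ∑ j ∈ Finset.Icc 1 i, f (m - i + j) * C j := by
  intro i hi hik
  have hsol := eq_convIcc_of_rec (b := fun j => a (k + j))
    (fun _ hj hjk => linearRec_eq_truncRecSum_add ha hj hjk) hC1 hCrec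
  rw [hsol i hi hik.le, convIcc_truncRecSum hik.le]

/-- Expression of `a_{k+i}` (`1 ≤ i < k`) as a linear combination of the initial values
`a_1, ..., a_k` with coefficients built from the auxiliary sequence `C_{k,n}`. -/
theorem stmt_11 (k : ℕ) (hk : 2 ≤ k) (f : ℕ → ℤ) (a : ℕ → ℤ) (C : ℕ → ℤ)
    (ha : ∀ i ≥ 1, a (i + k) = ∑ j ∈ Finset.Icc 1 k, f j * a (i + j - 1))
    (hC1 : C 1 = 1)
    (hCrec : ∀ n, 2 ≤ n → n ≤ k →
      C n = ∑ j ∈ Finset.Icc 1 (n - 1), f (k - j + 1) * C (n - j)) :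
    ∀ i, 1 ≤ i → i < k →
      a (k + i) =
        (∑ m ∈ Finset.Icc 1 i, a m * ∑ j ∈ Finset.Icc 1 m, f j * C (i - m + j)) +
        ∑ m ∈ Finset.Icc (i + 1) k, a m * ∑ j ∈ Finset.Icc 1 i, f (m - i + j) * C j :=
  stmt_11_general k f a C ha hC1 hCrec
end
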